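/- arXiv:2304.00458 — 3 statements merged into one kernel-verified Lean document; each statement's English description precedes it below -/
import Mathlib

section
/- The infinite Fibonacci word is not (eventually) periodic: there is no p ≥ 1 and N such that F(k+p) = F(k) for all k ≥ N. -/
/-- The two-letter alphabet: `A` and `B`. -/
inductive Letter : Type
  | A : Letter
  | B : Letter
  deriving DecidableEq, Repr

open Letter

/-- The Fibonacci substitution θ : a → ab, b → a. -/
def theta : Letter → List Letter
  | A => [A, B]
  | B => [A]

/-- Extension of the substitution to words, by concatenation. -/
def substWord (w : List Letter) : List Letter := w.flatMap theta

/-- The n-th finite Fibonacci word F_n = θ^n(a). -/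
def FibWord (n : ℕ) : List Letter := substWord^[n] [A]

/-- The infinite Fibonacci word (each F_n is a prefix of all later ones,
and `FibWord (k+1)` has length `fib (k+3) ≥ k+1`, so index `k` is defined). -/
def FibSeq (k : ℕ) : Letter := (FibWord (k + 1)).getD k A

/-!
If the Fibonacci word were eventually periodic with period `p`, each window of `p` letters far
enough out would contain the same number `c` of `A`s, so the number of `A`s among the first `L`
letters would stay within bounded distance of `c L / p`. But the prefix of length `F (n + 2)`
is `θⁿ(a)`, which contains exactly `F (n + 1)` letters `A`, so `p F (n + 1) - c F (n + 2)` would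
be bounded. By Binet's formula this quantity is `(p - c φ) F (n + 1) - c ψ ^ (n + 1)`, which is
unbounded because `φ` is irrational.
-/

section PeriodicCount

open Function Nat

variable {P : ℕ → Prop} [DecidablePred P] {p : ℕ}

theorem Function.Periodic.count_add_period (hP : Periodic P p) (n : ℕ) :
    count P (n + p) = count P n + count P p := by
  rw [add_comm n, count_add, add_comm]
  congr 2
  exact funext fun k => by rw [add_comm]; exact hP k

theorem Function.Periodic.abs_count_sub_le (hP : Periodic P p) (hp : 0 < p) (n : ℕ) :
    |(p : ℤ) * count P n - count P p * n| ≤ p * p := by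
  -- The discrepancy is itself `p`-periodic, so it suffices to bound it below `p`.
  set D : ℕ → ℤ := fun n => p * count P n - count P p * n
  have hD : Periodic D p := fun n => by
    simp only [D, hP.count_add_period]
    push_cast
    ring
  change |D n| ≤ _
  rw [← hD.map_mod_nat n]
  have hr : n % p ≤ p := (mod_lt n hp).le
  have h₁ : (p : ℤ) * count P (n % p) ≤ p * p := by
    exact_mod_cast Nat.mul_le_mul le_rfl ((count_le P).trans hr)
  have h₂ : (count P p : ℤ) * ↑(n % p) ≤ p * p := by
    exact_mod_cast Nat.mul_le_mul (count_le P) hr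
  exact abs_sub_le_of_nonneg_of_le (by positivity) h₁ (by positivity) h₂

theorem exists_abs_count_sub_le_of_eventually_periodic {N : ℕ} (hp : 0 < p)
    (hP : ∀ k, N ≤ k → (P (k + p) ↔ P k)) :
    ∃ c M : ℤ, ∀ n, N ≤ n → |(p : ℤ) * count P n - c * n| ≤ M := by
  have hQ : Periodic (fun k => P (N + k)) p := fun k => by
    simpa only [eq_iff_iff, add_assoc] using hP (N + k) (le_add_right N k)
  set c : ℤ := ↑(count (fun k => P (N + k)) p)
  refine ⟨c, p * p + |p * count P N - c * N|, fun n hn => ?_⟩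
  obtain ⟨m, rfl⟩ := exists_add_of_le hn
  have hsplit : (p : ℤ) * count P (N + m) - c * ↑(N + m)
      = (p * count (fun k => P (N + k)) m - c * m) + (p * count P N - c * N) := by
    rw [count_add]
    push_cast
    ring
  rw [hsplit]
  exact (abs_add_le _ _).trans (add_le_add_left (hQ.abs_count_sub_le hp m) _)

end PeriodicCount

section GoldenRatio

open Real goldenRatio

theorem intCast_sub_intCast_mul_goldenRatio_ne_zero {p : ℤ} (c : ℤ) (hp : p ≠ 0) :
    (p : ℝ) - c * φ ≠ 0 := by
  rcases eq_or_ne c 0 with rfl | hc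
  · simpa using hp
  · exact sub_ne_zero.mpr ((goldenRatio_irrational.intCast_mul hc).ne_int p).symm

theorem mul_fib_sub_mul_fib_eq (p c : ℝ) (n : ℕ) :
    p * Nat.fib (n + 1) - c * Nat.fib (n + 2) =
      (p - c * φ) * Nat.fib (n + 1) - c * ψ ^ (n + 1) := by
  linear_combination (-c) * fib_succ_sub_goldenRatio_mul_fib (n + 1)

theorem abs_goldenConj_pow_le_one (n : ℕ) : |ψ ^ n| ≤ 1 := by
  rw [abs_pow]
  exact pow_le_one₀ (abs_nonneg _)
    (abs_le.mpr ⟨neg_one_lt_goldenConj.le, goldenConj_neg.le.trans zero_le_one⟩)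

theorem eq_zero_of_abs_mul_fib_sub_mul_fib_le {p c M : ℤ} {N : ℕ}
    (h : ∀ n, N ≤ n → |p * (Nat.fib (n + 1) : ℤ) - c * Nat.fib (n + 2)| ≤ M) : p = 0 := by
  by_contra hp
  set δ := |(p : ℝ) - c * φ|
  have hδ : 0 < δ := abs_pos.mpr (intCast_sub_intCast_mul_goldenRatio_ne_zero c hp)
  have hbound : ∀ n, N ≤ n → δ * Nat.fib (n + 1) ≤ M + |c| := fun n hn => by
    have hM : |(p : ℝ) * Nat.fib (n + 1) - c * Nat.fib (n + 2)| ≤ M := by exact_mod_cast h n hn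
    have hψ : |(c : ℝ) * ψ ^ (n + 1)| ≤ |c| := by
      rw [abs_mul, Int.cast_abs]
      exact mul_le_of_le_one_right (abs_nonneg _) (abs_goldenConj_pow_le_one _)
    rw [mul_fib_sub_mul_fib_eq] at hM
    calc δ * Nat.fib (n + 1) = |((p : ℝ) - c * φ) * Nat.fib (n + 1)| := by
          rw [abs_mul, Nat.abs_cast]
      _ ≤ M + |c| := by
          linarith [abs_sub_abs_le_abs_sub (((p : ℝ) - c * φ) * Nat.fib (n + 1)) (c * ψ ^ (n + 1))]
  obtain ⟨m, hm⟩ := exists_nat_gt ((M + |c|) / δ : ℝ)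
  have hfib : m ≤ Nat.fib (m + N + 1) := by have := Nat.le_fib_add_one (m + N + 1); omega
  have hlt : (M + |c| : ℝ) < δ * Nat.fib (m + N + 1) :=
    (div_lt_iff₀' hδ).1 (hm.trans_le (Nat.cast_le.mpr hfib))
  linarith [hbound (m + N) (Nat.le_add_left N m)]

end GoldenRatio

section FibonacciWord

theorem FibWord_succ (n : ℕ) : FibWord (n + 1) = substWord (FibWord n) :=
  Function.iterate_succ_apply' substWord n [A]

theorem length_substWord (w : List Letter) : (substWord w).length = w.length + w.count A := by
  induction w with
  | nil => rfl
  | cons x w ih => cases x <;> simp [substWord, theta] at ih ⊢ <;> omega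

theorem count_substWord (w : List Letter) : (substWord w).count A = w.length := by
  induction w with
  | nil => rfl
  | cons x w ih => cases x <;> simp [substWord, theta] at ih ⊢ <;> omega

theorem length_FibWord : ∀ n, (FibWord n).length = Nat.fib (n + 2)
  | 0 => rfl
  | 1 => rfl
  | n + 2 => by
    rw [FibWord_succ, length_substWord, FibWord_succ n, count_substWord, ← FibWord_succ,
      length_FibWord n, length_FibWord (n + 1), Nat.fib_add_two (n := n + 2)]
    ring

theorem count_FibWord : ∀ n, (FibWord n).count A = Nat.fib (n + 1)
  | 0 => rfl
  | n + 1 => by rw [FibWord_succ, count_substWord, length_FibWord]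

theorem FibWord_prefix_succ (n : ℕ) : FibWord n <+: FibWord (n + 1) := by
  induction n with
  | zero => exact ⟨[B], rfl⟩
  | succ n ih =>
    rw [FibWord_succ, FibWord_succ (n + 1)]
    exact ih.flatMap theta

theorem FibWord_prefix_of_le {m n : ℕ} (h : m ≤ n) : FibWord m <+: FibWord n := by
  induction n, h using Nat.le_induction with
  | base => exact List.prefix_refl _
  | succ n _ ih => exact ih.trans (FibWord_prefix_succ n)

theorem getElem_FibWord {n k : ℕ} (hk : k < (FibWord n).length) : (FibWord n)[k] = FibSeq k := by
  have hk' : k < (FibWord (k + 1)).length := by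
    have h₁ := Nat.le_fib_add_one (k + 2)
    have h₂ : Nat.fib (k + 2) ≤ Nat.fib (k + 1 + 2) := Nat.fib_le_fib_succ
    rw [length_FibWord]
    omega
  rw [FibSeq, List.getD_eq_getElem _ _ hk']
  rcases le_total n (k + 1) with h | h
  · exact (FibWord_prefix_of_le h).getElem hk
  · exact ((FibWord_prefix_of_le h).getElem hk').symm

theorem map_FibSeq_range (n : ℕ) : (List.range (FibWord n).length).map FibSeq = FibWord n :=
  List.ext_getElem (by simp) fun k h _ => by simp [getElem_FibWord]

theorem count_FibSeq_fib (n : ℕ) :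
    Nat.count (FibSeq · = A) (Nat.fib (n + 2)) = Nat.fib (n + 1) := by
  rw [← length_FibWord, ← count_FibWord]
  conv_rhs => rw [← map_FibSeq_range]
  simp only [Nat.count, List.count, List.countP_map]
  congr 1

end FibonacciWord

/-- The infinite Fibonacci word is not eventually periodic. -/
theorem fib_word_not_eventually_periodic :
    ¬ ∃ p : ℕ, 1 ≤ p ∧ ∃ N : ℕ, ∀ k : ℕ, N ≤ k → FibSeq (k + p) = FibSeq k := by
  rintro ⟨p, hp, N, hper⟩
  obtain ⟨c, M, hM⟩ := exists_abs_count_sub_le_of_eventually_periodic (P := (FibSeq · = A)) hp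
    fun k hk => by rw [hper k hk]
  have hbounded : ∀ n, N ≤ n → |(p : ℤ) * Nat.fib (n + 1) - c * Nat.fib (n + 2)| ≤ M := by
    intro n hn
    have hN : N ≤ Nat.fib (n + 2) := by have := Nat.le_fib_add_one (n + 2); omega
    simpa only [count_FibSeq_fib] using hM _ hN
  have := eq_zero_of_abs_mul_fib_sub_mul_fib_le hbounded
  omega
end

section
/- For every n ≥ 3, F_{3n} = F_{3n-2} · F_{3n-3} · F_{3n-2}, i.e., each Fibonacci word with index divisible by 3 contains the previous such word centrally, flanked by two equal words. -/
open Letter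

lemma fibWord_succ (k : ℕ) : FibWord (k + 1) = substWord (FibWord k) := by
  simp [FibWord, Function.iterate_succ_apply']

lemma fibWord_add_two (k : ℕ) : FibWord (k + 2) = FibWord (k + 1) ++ FibWord k := by
  induction k with
  | zero => rfl
  | succ m ih =>
    rw [show m + 1 + 2 = (m + 2) + 1 by ring, fibWord_succ, ih, substWord,
      List.flatMap_append]
    rw [show (FibWord (m + 1)).flatMap theta = substWord (FibWord (m + 1)) from rfl,
      show (FibWord m).flatMap theta = substWord (FibWord m) from rfl,
      ← fibWord_succ, ← fibWord_succ, show m + 1 + 1 = m + 2 from rfl, ih]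

/-- For n ≥ 3, F_{3n} = F_{3n-2} · F_{3n-3} · F_{3n-2}. -/
theorem fib_word_central_flank (n : ℕ) (hn : 3 ≤ n) :
    FibWord (3 * n) =
      FibWord (3 * n - 2) ++ FibWord (3 * n - 3) ++ FibWord (3 * n - 2) := by
  obtain ⟨k, rfl⟩ : ∃ k, n = k + 3 := ⟨n - 3, by omega⟩
  have h1 : 3 * (k + 3) = (3 * k + 7) + 2 := by ring
  have h2 : 3 * (k + 3) - 2 = (3 * k + 6) + 1 := by omega
  have h3 : 3 * (k + 3) - 3 = 3 * k + 6 := by omega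
  rw [h2, h3, h1, fibWord_add_two, show 3 * k + 7 + 1 = (3 * k + 6) + 2 by ring,
    fibWord_add_two]
end

section
/- The positive solution s of the equation arising from the self-similar scaling w² − 4wx + 2x² = 0, namely s = w/(√2·x) with w = √2·x·(√2+1), equals 1+√2; consequently log(φ³)/log(1+√2) is the similarity dimension of the double-letter Fibonacci fractal, approximately 1.6379. -/
noncomputable def goldenRatio' : ℝ := (1 + Real.sqrt 5) / 2

lemma sqrt5_bounds : (2.23606797 : ℝ) < Real.sqrt 5 ∧ Real.sqrt 5 < 2.23606798 := by
  constructor <;>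
    nlinarith [Real.sqrt_nonneg 5, Real.sq_sqrt (show (0:ℝ) ≤ 5 by norm_num)]

lemma sqrt2_bounds : (1.41421356 : ℝ) < Real.sqrt 2 ∧ Real.sqrt 2 < 1.41421357 := by
  constructor <;>
    nlinarith [Real.sqrt_nonneg 2, Real.sq_sqrt (show (0:ℝ) ≤ 2 by norm_num)]

lemma log_aux (x : ℝ) (hx1 : -1 < x) (hx2 : x ≤ 0) (n : ℕ) :
    -(∑ i ∈ Finset.range n, x ^ (i + 1) / (i + 1)) - (-x) ^ (n + 1) / (1 - (-x)) ≤ Real.log (1 - x) ∧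
    Real.log (1 - x) ≤ -(∑ i ∈ Finset.range n, x ^ (i + 1) / (i + 1)) + (-x) ^ (n + 1) / (1 - (-x)) := by
  have hx : |x| < 1 := by rw [abs_lt]; constructor <;> linarith
  have h := Real.abs_log_sub_add_sum_range_le hx n
  rw [abs_le, abs_of_nonpos hx2] at h
  constructor <;> linarith [h.1, h.2]

lemma log4 : Real.log 4 = 2 * Real.log 2 := by
  rw [show (4:ℝ) = 2^2 by norm_num, Real.log_pow]; norm_num

lemma logphi3_bounds : (1.443635 : ℝ) < Real.log (2 + Real.sqrt 5) ∧
    Real.log (2 + Real.sqrt 5) < 1.443636 := by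
  have h5 := sqrt5_bounds
  have hlog2lo := Real.log_two_gt_d9
  have hlog2hi := Real.log_two_lt_d9
  have hlo : Real.log (4.23606797 : ℝ) < Real.log (2 + Real.sqrt 5) :=
    Real.log_lt_log (by norm_num) (by linarith [h5.1])
  have hhi : Real.log (2 + Real.sqrt 5) < Real.log (4.23606798 : ℝ) :=
    Real.log_lt_log (by nlinarith [Real.sqrt_nonneg 5]) (by linarith [h5.2])
  have e1 : Real.log (4.23606797 : ℝ) = Real.log 4 + Real.log (1 - (-0.0590169925 : ℝ)) := by
    rw [← Real.log_mul (by norm_num) (by norm_num)]; norm_num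
  have e2 : Real.log (4.23606798 : ℝ) = Real.log 4 + Real.log (1 - (-0.059016995 : ℝ)) := by
    rw [← Real.log_mul (by norm_num) (by norm_num)]; norm_num
  obtain ⟨hA, hB⟩ := log_aux (-0.0590169925 : ℝ) (by norm_num) (by norm_num) 9
  obtain ⟨hC, hD⟩ := log_aux (-0.059016995 : ℝ) (by norm_num) (by norm_num) 9
  rw [log4] at e1 e2
  rw [e1] at hlo; rw [e2] at hhi
  norm_num [Finset.sum_range_succ] at hA hB hC hD hlo hhi
  constructor <;> linarith

lemma log1s2_bounds : (0.881373 : ℝ) < Real.log (1 + Real.sqrt 2) ∧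
    Real.log (1 + Real.sqrt 2) < 0.881374 := by
  have h2 := sqrt2_bounds
  have hlog2lo := Real.log_two_gt_d9
  have hlog2hi := Real.log_two_lt_d9
  have hlo : Real.log (2.41421356 : ℝ) < Real.log (1 + Real.sqrt 2) :=
    Real.log_lt_log (by norm_num) (by linarith [h2.1])
  have hhi : Real.log (1 + Real.sqrt 2) < Real.log (2.41421357 : ℝ) :=
    Real.log_lt_log (by nlinarith [Real.sqrt_nonneg 2]) (by linarith [h2.2])
  have e1 : Real.log (2.41421356 : ℝ) = Real.log 2 + Real.log (1 - (-0.20710678 : ℝ)) := by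
    rw [← Real.log_mul (by norm_num) (by norm_num)]; norm_num
  have e2 : Real.log (2.41421357 : ℝ) = Real.log 2 + Real.log (1 - (-0.207106785 : ℝ)) := by
    rw [← Real.log_mul (by norm_num) (by norm_num)]; norm_num
  obtain ⟨hA, hB⟩ := log_aux (-0.20710678 : ℝ) (by norm_num) (by norm_num) 12
  obtain ⟨hC, hD⟩ := log_aux (-0.207106785 : ℝ) (by norm_num) (by norm_num) 12
  rw [e1] at hlo; rw [e2] at hhi
  norm_num [Finset.sum_range_succ] at hA hB hC hD hlo hhi
  constructor <;> linarith

lemma phi_cube : goldenRatio' ^ 3 = 2 + Real.sqrt 5 := by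
  have h5 : Real.sqrt 5 ^ 2 = 5 := Real.sq_sqrt (by norm_num)
  unfold goldenRatio'
  linear_combination ((Real.sqrt 5 + 3) / 8) * h5

/-- The scaling factor of the double-letter Fibonacci fractal: with
w = √2·x·(√2+1), we have w² − 4wx + 2x² = 0 and s = w/(√2·x) = 1 + √2;
consequently the similarity dimension log(φ³)/log(1+√2) is approximately
1.6379. -/
theorem fib_fractal_similarity_dimension :
    (∀ x : ℝ, 0 < x →
      (Real.sqrt 2 * x * (Real.sqrt 2 + 1)) ^ 2
          - 4 * (Real.sqrt 2 * x * (Real.sqrt 2 + 1)) * x + 2 * x ^ 2 = 0 ∧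
      (Real.sqrt 2 * x * (Real.sqrt 2 + 1)) / (Real.sqrt 2 * x) = 1 + Real.sqrt 2) ∧
    |Real.log (goldenRatio' ^ 3) / Real.log (1 + Real.sqrt 2) - 1.6379| < 0.0001 := by
  have s2 : Real.sqrt 2 ^ 2 = 2 := Real.sq_sqrt (by norm_num)
  constructor
  · intro x hx
    have h2pos : (0:ℝ) < Real.sqrt 2 := Real.sqrt_pos.mpr (by norm_num)
    constructor
    · linear_combination (x ^ 2 * (Real.sqrt 2 ^ 2 + 2 * Real.sqrt 2 - 1)) * s2
    · have hne : Real.sqrt 2 * x ≠ 0 := by positivity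
      field_simp
      ring
  · rw [phi_cube]
    obtain ⟨l1, u1⟩ := logphi3_bounds
    obtain ⟨l2, u2⟩ := log1s2_bounds
    have hL2 : (0:ℝ) < Real.log (1 + Real.sqrt 2) := by linarith
    have k1 : (1.6378:ℝ) < Real.log (2 + Real.sqrt 5) / Real.log (1 + Real.sqrt 2) := by
      rw [lt_div_iff₀ hL2]; nlinarith
    have k2 : Real.log (2 + Real.sqrt 5) / Real.log (1 + Real.sqrt 2) < 1.6380 := by
      rw [div_lt_iff₀ hL2]; nlinarith
    rw [abs_lt]
    constructor <;> [linarith; linarith]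
end
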